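/- arXiv:1911.11400 — 2 statements merged into one kernel-verified Lean document; each statement's English description precedes it below -/
import Mathlib

section
/- The morphism Φ = (Φ₁, Φ₂) : (N ⊗ N →^Id N ⊗ N, [−,−], [−,−]) → (M →^∂ N, ·, {−,−}), with Φ₁(n ⊗ n') = {n,n'} and Φ₂(n ⊗ n') = [n,n'], is a central extension of braided crossed modules of Lie K-algebras if and only if (M →^∂ N, ·, {−,−}) is perfect. -/
/-!
The elementary tensors `t n n'` span `T` as a module: they generate `T` as a Lie algebra by the
universal property, and their linear span is already closed under the bracket because
`⁅t a b, t a' b'⁆ = t ⁅a, b⁆ ⁅a', b'⁆`. Hence the images of `Φ₁` and `Φ₂` are spanned by the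
braidings `br n n'` and the commutators `⁅n, n'⁆`, so surjectivity of `Φ₁`, `Φ₂` is exactly
perfectness. Centrality of the kernels holds unconditionally: the bracket of `T` factors as
`⁅x, y⁆ = t (Φ₂ x) (Φ₂ y)`, and `Φ₂ = d ∘ Φ₁`.
-/

universe u

/-- The Lie bracket as a bilinear map. -/
def bracketMap (K : Type u) [CommRing K] (M : Type u) [LieRing M] [LieAlgebra K M] :
    M →ₗ[K] M →ₗ[K] M :=
  LinearMap.mk₂ K (fun a b => ⁅a, b⁆) add_lie smul_lie lie_add lie_smul

/-- Axioms for a crossed module of Lie `K`-algebras `(d : M → N, act)`. -/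
structure LieXMod (K : Type u) [CommRing K] (M N : Type u)
    [LieRing M] [LieAlgebra K M] [LieRing N] [LieAlgebra K N]
    (d : M →ₗ⁅K⁆ N) (act : N →ₗ[K] M →ₗ[K] M) : Prop where
  act_lie : ∀ n n' m, act ⁅n, n'⁆ m = act n (act n' m) - act n' (act n m)
  lie_act : ∀ n m m', act n ⁅m, m'⁆ = ⁅act n m, m'⁆ + ⁅m, act n m'⁆
  equivar : ∀ n m, d (act n m) = ⁅n, d m⁆
  peiffer : ∀ m m', act (d m) m' = ⁅m, m'⁆

/-- Axioms `BLie1`–`BLie6` for a braiding on a crossed module of Lie algebras. -/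
structure LieBraiding (K : Type u) [CommRing K] (M N : Type u)
    [LieRing M] [LieAlgebra K M] [LieRing N] [LieAlgebra K N]
    (d : M →ₗ⁅K⁆ N) (act : N →ₗ[K] M →ₗ[K] M)
    (br : N →ₗ[K] N →ₗ[K] M) : Prop where
  b1 : ∀ n n', d (br n n') = ⁅n, n'⁆
  b2 : ∀ m m', br (d m) (d m') = ⁅m, m'⁆
  b3 : ∀ m n, br (d m) n = - act n m
  b4 : ∀ n m, br n (d m) = act n m
  b5 : ∀ n n' n'', br n ⁅n', n''⁆ = br ⁅n, n'⁆ n'' - br ⁅n, n''⁆ n'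
  b6 : ∀ n n' n'', br ⁅n, n'⁆ n'' = br n ⁅n', n''⁆ - br n' ⁅n, n''⁆

/-- `T`, together with the bilinear pairing `t`, is the non-abelian tensor product
of the Lie algebras `A` and `B` acting on each other via `actAB` and `actBA`:
it satisfies the defining relations of the presentation and the universal property. -/
structure IsNATensor (K : Type u) [CommRing K] (A B : Type u)
    [LieRing A] [LieAlgebra K A] [LieRing B] [LieAlgebra K B]
    (actAB : A →ₗ[K] B →ₗ[K] B) (actBA : B →ₗ[K] A →ₗ[K] A)
    (T : Type u) [LieRing T] [LieAlgebra K T]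
    (t : A →ₗ[K] B →ₗ[K] T) : Prop where
  rel3a : ∀ a a' b, t ⁅a, a'⁆ b = t a (actAB a' b) - t a' (actAB a b)
  rel3b : ∀ a b b', t a ⁅b, b'⁆ = t (actBA b' a) b - t (actBA b a) b'
  rel4 : ∀ a b a' b', ⁅t a b, t a' b'⁆ = - t (actBA b a) (actAB a' b')
  lift : ∀ (C : Type u) [LieRing C] [LieAlgebra K C] (f : A →ₗ[K] B →ₗ[K] C),
      (∀ a a' b, f ⁅a, a'⁆ b = f a (actAB a' b) - f a' (actAB a b)) →
      (∀ a b b', f a ⁅b, b'⁆ = f (actBA b' a) b - f (actBA b a) b') →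
      (∀ a b a' b', ⁅f a b, f a' b'⁆ = - f (actBA b a) (actAB a' b')) →
      ∃! φ : T →ₗ⁅K⁆ C, ∀ a b, φ (t a b) = f a b

/-- `T` with pairing `t` is the non-abelian tensor square of `N` (adjoint actions). -/
def IsNATensorSq (K : Type u) [CommRing K] (N : Type u) [LieRing N] [LieAlgebra K N]
    (T : Type u) [LieRing T] [LieAlgebra K T] (t : N →ₗ[K] N →ₗ[K] T) : Prop :=
  IsNATensor K N N (bracketMap K N) (bracketMap K N) T t

namespace LieSubalgebra

variable {R L : Type*} [CommRing R] [LieRing L] [LieAlgebra R L]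

open Submodule in
theorem coe_lieSpan_eq_span_of_forall_lie_mem_span {s : Set L}
    (hs : ∀ᵉ (x ∈ s) (y ∈ s), ⁅x, y⁆ ∈ span R s) :
    (lieSpan R L s : Submodule R L) = span R s := by
  suffices ∀ {x y}, x ∈ span R s → y ∈ span R s → ⁅x, y⁆ ∈ span R s by
    refine le_antisymm ?_ submodule_span_le_lieSpan
    change _ ≤ ({ span R s with lie_mem' := this } : LieSubalgebra R L)
    rw [lieSpan_le]
    exact subset_span
  intro x y hx hy
  induction hx, hy using span_induction₂ with
  | mem_mem x y hx hy => exact hs x hx y hy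
  | zero_left y hy => simp
  | zero_right x hx => simp
  | add_left x y z _ _ _ hx hy => simpa [add_lie] using add_mem hx hy
  | add_right x y z _ _ _ hx hy => simpa [lie_add] using add_mem hx hy
  | smul_left r x y _ _ h => simpa [smul_lie] using smul_mem _ r h
  | smul_right r x y _ _ h => simpa [lie_smul] using smul_mem _ r h

end LieSubalgebra

theorem LieHom.surjective_iff_lieSpan_image_eq_top {R L L' : Type*} [CommRing R]
    [LieRing L] [LieAlgebra R L] [LieRing L'] [LieAlgebra R L'] (f : L →ₗ⁅R⁆ L')
    {s : Set L} (hs : Submodule.span R s = ⊤) :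
    Function.Surjective f ↔ LieSubalgebra.lieSpan R L' (f '' s) = ⊤ := by
  refine ⟨fun h => eq_top_iff.mpr fun y _ => ?_, fun h => ?_⟩
  · obtain ⟨x, rfl⟩ := h y
    have hx : x ∈ Submodule.span R s := hs ▸ Submodule.mem_top
    exact LieSubalgebra.submodule_span_le_lieSpan
      (Submodule.apply_mem_span_image_of_mem_span f.toLinearMap hx)
  · rw [← LieHom.range_eq_top, eq_top_iff, ← h, LieSubalgebra.lieSpan_le]
    rintro _ ⟨x, -, rfl⟩
    exact f.mem_range_self x

def LinearMap.range₂ {R M N P : Type*} [CommSemiring R] [AddCommMonoid M] [AddCommMonoid N]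
    [AddCommMonoid P] [Module R M] [Module R N] [Module R P] (f : M →ₗ[R] N →ₗ[R] P) : Set P :=
  {x | ∃ m n, x = f m n}

theorem LinearMap.image_range₂ {R M N P Q : Type*} [CommSemiring R] [AddCommMonoid M]
    [AddCommMonoid N] [AddCommMonoid P] [AddCommMonoid Q] [Module R M] [Module R N] [Module R P]
    [Module R Q] {f : M →ₗ[R] N →ₗ[R] P} {f' : M →ₗ[R] N →ₗ[R] Q} {g : P → Q}
    (h : ∀ m n, g (f m n) = f' m n) : g '' f.range₂ = f'.range₂ := by
  ext y
  constructor
  · rintro ⟨_, ⟨m, n, rfl⟩, rfl⟩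
    exact ⟨m, n, h m n⟩
  · rintro ⟨m, n, rfl⟩
    exact ⟨f m n, ⟨m, n, rfl⟩, h m n⟩

namespace IsNATensor

variable {K : Type u} [CommRing K] {A B : Type u} [LieRing A] [LieAlgebra K A] [LieRing B]
  [LieAlgebra K B] {actAB : A →ₗ[K] B →ₗ[K] B} {actBA : B →ₗ[K] A →ₗ[K] A}
  {T : Type u} [LieRing T] [LieAlgebra K T] {t : A →ₗ[K] B →ₗ[K] T}

theorem lie_mem_span_range₂ (h : IsNATensor K A B actAB actBA T t) :
    ∀ᵉ (x ∈ t.range₂) (y ∈ t.range₂), ⁅x, y⁆ ∈ Submodule.span K t.range₂ := by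
  rintro _ ⟨a, b, rfl⟩ _ ⟨a', b', rfl⟩
  rw [h.rel4]
  exact neg_mem (Submodule.subset_span ⟨_, _, rfl⟩)

theorem lieSpan_range₂_eq_top (h : IsNATensor K A B actAB actBA T t) :
    LieSubalgebra.lieSpan K T t.range₂ = ⊤ := by
  set S := LieSubalgebra.lieSpan K T t.range₂
  have hS : ∀ a b, t a b ∈ S := fun a b => LieSubalgebra.subset_lieSpan ⟨a, b, rfl⟩
  let tS : A →ₗ[K] B →ₗ[K] S := LinearMap.mk₂ K (fun a b => ⟨t a b, hS a b⟩)
    (fun _ _ _ => Subtype.ext (by simp)) (fun _ _ _ => Subtype.ext (by simp))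
    (fun _ _ _ => Subtype.ext (by simp)) (fun _ _ _ => Subtype.ext (by simp))
  obtain ⟨φ, hφ, -⟩ := h.lift S tS
    (fun a a' b => Subtype.ext (h.rel3a a a' b)) (fun a b b' => Subtype.ext (h.rel3b a b b'))
    (fun a b a' b' => Subtype.ext (h.rel4 a b a' b'))
  obtain ⟨ψ, -, huniq⟩ := h.lift T t h.rel3a h.rel3b h.rel4
  have hφ_id : S.incl.comp φ = LieHom.id :=
    (huniq _ fun a b => congrArg Subtype.val (hφ a b)).trans (huniq _ fun _ _ => rfl).symm
  refine eq_top_iff.mpr fun x _ => ?_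
  rw [← LieHom.id_apply (R := K) x, ← hφ_id]
  exact (φ x).2

theorem span_range₂_eq_top (h : IsNATensor K A B actAB actBA T t) :
    Submodule.span K t.range₂ = ⊤ := by
  rw [← LieSubalgebra.coe_lieSpan_eq_span_of_forall_lie_mem_span h.lie_mem_span_range₂,
    h.lieSpan_range₂_eq_top, LieSubalgebra.top_toSubmodule]

theorem linearMap_ext (h : IsNATensor K A B actAB actBA T t) {P : Type*} [AddCommGroup P]
    [Module K P] {f g : T →ₗ[K] P} (hfg : ∀ a b, f (t a b) = g (t a b)) : f = g :=
  LinearMap.ext_on h.span_range₂_eq_top (by rintro _ ⟨a, b, rfl⟩; exact hfg a b)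

end IsNATensor

namespace IsNATensorSq

variable {K : Type u} [CommRing K] {N : Type u} [LieRing N] [LieAlgebra K N]
  {T : Type u} [LieRing T] [LieAlgebra K T] {t : N →ₗ[K] N →ₗ[K] T}

theorem lie_apply_apply (h : IsNATensorSq K N T t) (a b a' b' : N) :
    ⁅t a b, t a' b'⁆ = t ⁅a, b⁆ ⁅a', b'⁆ := by
  rw [h.rel4, bracketMap, LinearMap.mk₂_apply, LinearMap.mk₂_apply, ← lie_skew, map_neg,
    LinearMap.neg_apply, neg_neg]

theorem lie_eq_apply_commutator (h : IsNATensorSq K N T t) {Φ : T →ₗ⁅K⁆ N}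
    (hΦ : ∀ a b, Φ (t a b) = ⁅a, b⁆) (x y : T) : ⁅x, y⁆ = t (Φ x) (Φ y) := by
  have hbil : bracketMap K T = t.compl₁₂ Φ.toLinearMap Φ.toLinearMap :=
    h.linearMap_ext fun a b => h.linearMap_ext fun a' b' => by
      simp [bracketMap, h.lie_apply_apply, hΦ]
  exact LinearMap.congr_fun₂ hbil x y

end IsNATensorSq

theorem Phi_central_extension_iff_perfect_general (K : Type u) [CommRing K] (M N : Type u) [LieRing M] [LieAlgebra K M]
    [LieRing N] [LieAlgebra K N] (d : M →ₗ⁅K⁆ N) (act : N →ₗ[K] M →ₗ[K] M)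
    (br : N →ₗ[K] N →ₗ[K] M)
    (hB : LieBraiding K M N d act br)
    (T : Type u) [LieRing T] [LieAlgebra K T] (t : N →ₗ[K] N →ₗ[K] T)
    (hT : IsNATensorSq K N T t) (Φ₁ : T →ₗ⁅K⁆ M) (Φ₂ : T →ₗ⁅K⁆ N)
    (hΦ₁ : ∀ n n' : N, Φ₁ (t n n') = br n n')
    (hΦ₂ : ∀ n n' : N, Φ₂ (t n n') = ⁅n, n'⁆) :
    (Function.Surjective Φ₁ ∧ Function.Surjective Φ₂ ∧
        (∀ x : T, Φ₁ x = 0 → ∀ y : T, ⁅y, x⁆ = 0) ∧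
        (∀ x : T, Φ₂ x = 0 → ∀ y : T, ⁅x, y⁆ = 0 ∧ ⁅y, x⁆ = 0)) ↔
      (LieSubalgebra.lieSpan K M {x : M | ∃ n n' : N, x = br n n'} = ⊤ ∧
      LieSubalgebra.lieSpan K N {x : N | ∃ a b : N, x = ⁅a, b⁆} = ⊤) := by
  have hspan := hT.span_range₂_eq_top
  have hlie := hT.lie_eq_apply_commutator hΦ₂
  have hd : ∀ x, d (Φ₁ x) = Φ₂ x := LinearMap.congr_fun
    (hT.linearMap_ext (f := (d.comp Φ₁).toLinearMap) (g := Φ₂.toLinearMap)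
      fun a b => by simp [hΦ₁, hΦ₂, hB.b1])
  have hsurj₁ : Function.Surjective Φ₁ ↔ LieSubalgebra.lieSpan K M br.range₂ = ⊤ := by
    rw [Φ₁.surjective_iff_lieSpan_image_eq_top hspan, LinearMap.image_range₂ hΦ₁]
  have hsurj₂ :
      Function.Surjective Φ₂ ↔ LieSubalgebra.lieSpan K N (bracketMap K N).range₂ = ⊤ := by
    rw [Φ₂.surjective_iff_lieSpan_image_eq_top hspan,
      LinearMap.image_range₂ (f' := bracketMap K N) hΦ₂]
  have hcentral₁ : ∀ x : T, Φ₁ x = 0 → ∀ y : T, ⁅y, x⁆ = 0 := fun x hx y => by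
    rw [hlie, ← hd x]
    simp [hx]
  have hcentral₂ : ∀ x : T, Φ₂ x = 0 → ∀ y : T, ⁅x, y⁆ = 0 ∧ ⁅y, x⁆ = 0 := fun x hx y => by
    simp [hlie, hx]
  exact ⟨fun h => ⟨hsurj₁.1 h.1, hsurj₂.1 h.2.1⟩,
    fun h => ⟨hsurj₁.2 h.1, hsurj₂.2 h.2, hcentral₁, hcentral₂⟩⟩

theorem Phi_central_extension_iff_perfect (K : Type u) [CommRing K] (M N : Type u) [LieRing M] [LieAlgebra K M]
    [LieRing N] [LieAlgebra K N] (d : M →ₗ⁅K⁆ N) (act : N →ₗ[K] M →ₗ[K] M)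
    (br : N →ₗ[K] N →ₗ[K] M) (hX : LieXMod K M N d act)
    (hB : LieBraiding K M N d act br)
    (T : Type u) [LieRing T] [LieAlgebra K T] (t : N →ₗ[K] N →ₗ[K] T)
    (hT : IsNATensorSq K N T t) (Φ₁ : T →ₗ⁅K⁆ M) (Φ₂ : T →ₗ⁅K⁆ N)
    (hΦ₁ : ∀ n n' : N, Φ₁ (t n n') = br n n')
    (hΦ₂ : ∀ n n' : N, Φ₂ (t n n') = ⁅n, n'⁆) :
    (Function.Surjective Φ₁ ∧ Function.Surjective Φ₂ ∧
        (∀ x : T, Φ₁ x = 0 → ∀ y : T, ⁅y, x⁆ = 0) ∧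
        (∀ x : T, Φ₂ x = 0 → ∀ y : T, ⁅x, y⁆ = 0 ∧ ⁅y, x⁆ = 0)) ↔
      (LieSubalgebra.lieSpan K M {x : M | ∃ n n' : N, x = br n n'} = ⊤ ∧
      LieSubalgebra.lieSpan K N {x : N | ∃ a b : N, x = ⁅a, b⁆} = ⊤) :=
  Phi_central_extension_iff_perfect_general K M N d act br hB T t hT Φ₁ Φ₂ hΦ₁ hΦ₂
end

section
/- If M is a perfect Lie K-algebra (M = [M,M]), then there is an isomorphism of Lie K-algebras M ⊗ (M ⊗ M) ≅ M ⊗ M, given by m ⊗ m' ↦ m ⊗ (m'₁ ⊗ m'₂) for any choice m' = [m'₁, m'₂], with inverse m ⊗ (m' ⊗ m'') ↦ m ⊗ [m', m'']. -/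
universe u

/-!
Since `M` is perfect, the commutator map `δ : M ⊗ M → M`, `a ⊗ b ↦ ⁅a, b⁆`, is surjective, and
`m ⊗ x ∈ M ⊗ (M ⊗ M)` depends on `x` only through `δ x`: the action is `m · x = m ⊗ δ x`, so writing
`m` as a sum of brackets, the defining relations give `⁅a, b⁆ ⊗ x = a ⊗ (b ⊗ δ x) - b ⊗ (a ⊗ δ x)`.
Hence `m ⊗ x ↦ m ⊗ δ x` and `m ⊗ δ x ↦ m ⊗ x` are well-defined homomorphisms, and they are mutually
inverse because both tensor products are generated by their elementary tensors.
-/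

open Submodule in
theorem LieSubalgebra.coe_lieSpan_eq_span_of_forall_lie_mem_span_s19 {K L : Type*} [CommRing K]
    [LieRing L] [LieAlgebra K L] {s : Set L} (hs : ∀ᵉ (x ∈ s) (y ∈ s), ⁅x, y⁆ ∈ span K s) :
    (lieSpan K L s : Submodule K L) = span K s := by
  suffices ∀ {x y}, x ∈ span K s → y ∈ span K s → ⁅x, y⁆ ∈ span K s by
    refine le_antisymm ?_ submodule_span_le_lieSpan
    change _ ≤ ({ span K s with lie_mem' := this } : LieSubalgebra K L)
    rw [lieSpan_le]
    exact subset_span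
  intro x y hx hy
  have hxy := apply_mem_map₂ (LieModule.toEnd K L L : L →ₗ[K] Module.End K L) hx hy
  rw [map₂_span_span] at hxy
  refine span_le.mpr ?_ hxy
  rintro _ ⟨x, hx, y, hy, rfl⟩
  exact hs x hx y hy

theorem span_lie_eq_top_of_lieSpan_eq_top {K L : Type*} [CommRing K] [LieRing L]
    [LieAlgebra K L] (h : LieSubalgebra.lieSpan K L {x : L | ∃ a b : L, x = ⁅a, b⁆} = ⊤) :
    Submodule.span K {x : L | ∃ a b : L, x = ⁅a, b⁆} = ⊤ := by
  rw [← LieSubalgebra.coe_lieSpan_eq_span_of_forall_lie_mem_span_s19, h,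
    LieSubalgebra.top_toSubmodule]
  rintro _ ⟨a, b, rfl⟩ _ ⟨c, d, rfl⟩
  exact Submodule.subset_span ⟨_, _, rfl⟩

@[simp]
theorem bracketMap_apply {K : Type u} [CommRing K] {M : Type u} [LieRing M] [LieAlgebra K M]
    (a b : M) : bracketMap K M a b = ⁅a, b⁆ := rfl

namespace IsNATensor

variable {K : Type u} [CommRing K] {A B T : Type u} [LieRing A] [LieAlgebra K A] [LieRing B]
  [LieAlgebra K B] [LieRing T] [LieAlgebra K T] {actAB : A →ₗ[K] B →ₗ[K] B}
  {actBA : B →ₗ[K] A →ₗ[K] A} {t : A →ₗ[K] B →ₗ[K] T}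

theorem hom_ext (h : IsNATensor K A B actAB actBA T t) {C : Type u} [LieRing C]
    [LieAlgebra K C] {φ ψ : T →ₗ⁅K⁆ C} (hφψ : ∀ a b, φ (t a b) = ψ (t a b)) : φ = ψ :=
  (h.lift C (t.compr₂ φ) (fun a a' b => by simp [h.rel3a]) (fun a b b' => by simp [h.rel3b])
    (fun a b a' b' => by simp [← LieHom.map_lie, h.rel4])).unique (fun _ _ => rfl)
    (fun a b => (hφψ a b).symm)

theorem span_tmul_eq_top (h : IsNATensor K A B actAB actBA T t) :
    Submodule.span K {x : T | ∃ a b, x = t a b} = ⊤ := by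
  set s := {x : T | ∃ a b, x = t a b}
  rw [← LieSubalgebra.coe_lieSpan_eq_span_of_forall_lie_mem_span_s19, ← LieSubalgebra.top_toSubmodule,
    LieSubalgebra.toSubmodule_inj]
  swap
  · rintro _ ⟨a, b, rfl⟩ _ ⟨a', b', rfl⟩
    rw [h.rel4]
    exact neg_mem (Submodule.subset_span ⟨_, _, rfl⟩)
  -- Lifting the corestriction of `t` to `S` gives a right inverse of the inclusion `S → T`.
  set S := LieSubalgebra.lieSpan K T s
  have hi : Function.Injective S.incl := Subtype.val_injective
  let tS := LinearMap.codRestrict₂ t S.incl.toLinearMap hi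
    (fun a b => ⟨⟨t a b, LieSubalgebra.subset_lieSpan ⟨a, b, rfl⟩⟩, rfl⟩)
  have htS : ∀ a b, (tS a b : T) = t a b := LinearMap.codRestrict₂_apply t _ hi _
  obtain ⟨φ, hφ, -⟩ := h.lift S tS (fun a a' b => hi (by simp [htS, h.rel3a]))
    (fun a b b' => hi (by simp [htS, h.rel3b])) (fun a b a' b' => hi (by simp [htS, h.rel4]))
  have hid : S.incl.comp φ = LieHom.id := h.hom_ext fun a b => by simp [hφ, htS]
  refine eq_top_iff.mpr fun x _ => ?_
  have hx : (φ x : T) = x := congr($hid x)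
  exact hx ▸ (φ x).2

end IsNATensor

namespace IsNATensorSq

variable {K : Type u} [CommRing K] {M T : Type u} [LieRing M] [LieAlgebra K M] [LieRing T]
  [LieAlgebra K T] {t : M →ₗ[K] M →ₗ[K] T}

theorem exists_lieHom_tmul_eq_lie (h : IsNATensorSq K M T t) :
    ∃ δ : T →ₗ⁅K⁆ M, ∀ a b, δ (t a b) = ⁅a, b⁆ :=
  (h.lift M (bracketMap K M) (fun a a' b => lie_lie a a' b)
    (fun a b b' => by
      simp only [bracketMap_apply]
      rw [leibniz_lie, ← lie_skew b a, ← lie_skew b' a, neg_lie, neg_lie, ← lie_skew ⁅a, b'⁆ b]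
      abel)
    (fun a b a' b' => by
      simp only [bracketMap_apply]
      rw [← lie_skew a b, neg_lie])).exists

noncomputable def commutator (h : IsNATensorSq K M T t) : T →ₗ⁅K⁆ M :=
  h.exists_lieHom_tmul_eq_lie.choose

@[simp]
theorem commutator_tmul (h : IsNATensorSq K M T t) (a b : M) : h.commutator (t a b) = ⁅a, b⁆ :=
  h.exists_lieHom_tmul_eq_lie.choose_spec a b

theorem commutator_surjective (h : IsNATensorSq K M T t)
    (hperf : LieSubalgebra.lieSpan K M {x : M | ∃ a b : M, x = ⁅a, b⁆} = ⊤) :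
    Function.Surjective h.commutator := by
  have hle : LieSubalgebra.lieSpan K M {x : M | ∃ a b : M, x = ⁅a, b⁆} ≤ h.commutator.range :=
    LieSubalgebra.lieSpan_le.mpr (by rintro _ ⟨a, b, rfl⟩; exact ⟨t a b, h.commutator_tmul a b⟩)
  exact h.commutator.range_eq_top.mp (top_le_iff.mp (hperf ▸ hle))

theorem act_eq_tmul_commutator (h : IsNATensorSq K M T t) {act : M →ₗ[K] T →ₗ[K] T}
    (hact : ∀ m a b : M, act m (t a b) = t m ⁅a, b⁆) (m : M) (x : T) :
    act m x = t m (h.commutator x) := by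
  have : act m = (t m).comp (h.commutator : T →ₗ[K] M) :=
    LinearMap.ext_on (IsNATensor.span_tmul_eq_top h) (by rintro _ ⟨a, b, rfl⟩; simp [hact])
  exact congr($this x)

theorem star_eq_lie_commutator (h : IsNATensorSq K M T t) {star : T →ₗ[K] M →ₗ[K] M}
    (hstar : ∀ a b m : M, star (t a b) m = ⁅⁅a, b⁆, m⁆) (x : T) (m : M) :
    star x m = ⁅h.commutator x, m⁆ := by
  have : star = (bracketMap K M).comp (h.commutator : T →ₗ[K] M) :=
    LinearMap.ext_on (IsNATensor.span_tmul_eq_top h) (by rintro _ ⟨a, b, rfl⟩; ext; simp [hstar])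
  exact congr($this x m)

end IsNATensorSq

section TensorWithTensorSq

variable {K : Type u} [CommRing K] {M T2 T3 : Type u} [LieRing M] [LieAlgebra K M] [LieRing T2]
  [LieAlgebra K T2] [LieRing T3] [LieAlgebra K T3] {t2 : M →ₗ[K] M →ₗ[K] T2}
  {actM : M →ₗ[K] T2 →ₗ[K] T2} {star : T2 →ₗ[K] M →ₗ[K] M} {t3 : M →ₗ[K] T2 →ₗ[K] T3}

theorem exists_lieHom_tmul_eq_act (hT2 : IsNATensorSq K M T2 t2)
    (hactM : ∀ m a b : M, actM m (t2 a b) = t2 m ⁅a, b⁆)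
    (hstar : ∀ a b m : M, star (t2 a b) m = ⁅⁅a, b⁆, m⁆)
    (hT3 : IsNATensor K M T2 actM star T3 t3) :
    ∃ φ : T3 →ₗ⁅K⁆ T2, ∀ m x, φ (t3 m x) = actM m x := by
  refine (hT3.lift T2 actM ?_ ?_ ?_).exists <;> intros <;>
    simp only [hT2.act_eq_tmul_commutator hactM, hT2.star_eq_lie_commutator hstar,
      IsNATensorSq.commutator_tmul, LieHom.map_lie]
  exacts [hT2.rel3a _ _ _, hT2.rel3b _ _ _, hT2.rel4 _ _ _ _]

theorem tmul_eq_tmul_of_commutator_eq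
    (hperf : LieSubalgebra.lieSpan K M {x : M | ∃ a b : M, x = ⁅a, b⁆} = ⊤)
    (hT2 : IsNATensorSq K M T2 t2) (hactM : ∀ m a b : M, actM m (t2 a b) = t2 m ⁅a, b⁆)
    (hT3 : IsNATensor K M T2 actM star T3 t3) {x y : T2}
    (hxy : hT2.commutator x = hT2.commutator y) (m : M) : t3 m x = t3 m y := by
  have : t3.flip (x - y) = 0 := LinearMap.ext_on (span_lie_eq_top_of_lieSpan_eq_top hperf) (by
    rintro _ ⟨a, b, rfl⟩
    simp [hT3.rel3a, hT2.act_eq_tmul_commutator hactM, hxy])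
  simpa [sub_eq_zero] using congr($this m)

theorem exists_lieHom_tmul_commutator_eq
    (hperf : LieSubalgebra.lieSpan K M {x : M | ∃ a b : M, x = ⁅a, b⁆} = ⊤)
    (hT2 : IsNATensorSq K M T2 t2) (hactM : ∀ m a b : M, actM m (t2 a b) = t2 m ⁅a, b⁆)
    (hstar : ∀ a b m : M, star (t2 a b) m = ⁅⁅a, b⁆, m⁆)
    (hT3 : IsNATensor K M T2 actM star T3 t3) :
    ∃ ψ : T2 →ₗ⁅K⁆ T3, ∀ m x, ψ (t2 m (hT2.commutator x)) = t3 m x := by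
  set δ := hT2.commutator
  have hsurj : Function.Surjective δ := hT2.commutator_surjective hperf
  obtain ⟨s, hs⟩ : ∃ s : M → T2, ∀ n, δ (s n) = n := hsurj.hasRightInverse
  have key {x y : T2} (hxy : δ x = δ y) (m : M) : t3 m x = t3 m y :=
    tmul_eq_tmul_of_commutator_eq hperf hT2 hactM hT3 hxy m
  let g : M →ₗ[K] M →ₗ[K] T3 := LinearMap.mk₂ K (fun m n => t3 m (s n))
    (fun m m' n => by simp) (fun c m n => by simp)
    (fun m n n' => by rw [key (y := s n + s n') (by simp [hs]), map_add])
    (fun c m n => by rw [key (y := c • s n) (by simp [hs]), map_smul])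
  have hg {m : M} (x : T2) {n : M} (hn : δ x = n) : g m n = t3 m x := key (by rw [hs, hn]) m
  have hact := hT2.act_eq_tmul_commutator hactM
  have hstar' := hT2.star_eq_lie_commutator hstar
  obtain ⟨ψ, hψ, -⟩ := hT2.lift T3 g
    (fun m m' n => by
      obtain ⟨x, rfl⟩ := hsurj n
      simp only [bracketMap_apply]
      rw [hg x rfl, hg (t2 m' (δ x)) (by simp [δ]), hg (t2 m (δ x)) (by simp [δ]), hT3.rel3a,
        hact, hact])
    (fun m n n' => by
      obtain ⟨x, rfl⟩ := hsurj n
      obtain ⟨x', rfl⟩ := hsurj n'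
      simp only [bracketMap_apply]
      rw [hg ⁅x, x'⁆ (by simp), hg x rfl, hg x' rfl, hT3.rel3b, hstar', hstar'])
    (fun m n m' n' => by
      obtain ⟨x, rfl⟩ := hsurj n
      obtain ⟨x', rfl⟩ := hsurj n'
      simp only [bracketMap_apply]
      rw [hg x rfl, hg x' rfl, hg (t2 m' (δ x')) (by simp [δ]), hT3.rel4, hstar', hact])
  exact ⟨ψ, fun m x => (hψ m _).trans (hg x rfl)⟩

end TensorWithTensorSq

theorem tensor_iso_of_perfect (K : Type u) [CommRing K]
    (M : Type u) [LieRing M] [LieAlgebra K M]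
    (hperf : LieSubalgebra.lieSpan K M {x : M | ∃ a b : M, x = ⁅a, b⁆} = ⊤)
    (T2 : Type u) [LieRing T2] [LieAlgebra K T2] (t2 : M →ₗ[K] M →ₗ[K] T2)
    (hT2 : IsNATensorSq K M T2 t2)
    (actM : M →ₗ[K] T2 →ₗ[K] T2)
    (hactM : ∀ m a b : M, actM m (t2 a b) = t2 m ⁅a, b⁆)
    (star : T2 →ₗ[K] M →ₗ[K] M)
    (hstar : ∀ a b m : M, star (t2 a b) m = ⁅⁅a, b⁆, m⁆)
    (T3 : Type u) [LieRing T3] [LieAlgebra K T3] (t3 : M →ₗ[K] T2 →ₗ[K] T3)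
    (hT3 : IsNATensor K M T2 actM star T3 t3) :
    ∃ e : T3 ≃ₗ⁅K⁆ T2,
      (∀ m a b : M, e (t3 m (t2 a b)) = t2 m ⁅a, b⁆) ∧
      ∀ m a b : M, e.symm (t2 m ⁅a, b⁆) = t3 m (t2 a b) := by
  obtain ⟨φ, hφ⟩ := exists_lieHom_tmul_eq_act hT2 hactM hstar hT3
  obtain ⟨ψ, hψ⟩ := exists_lieHom_tmul_commutator_eq hperf hT2 hactM hstar hT3
  have hact := hT2.act_eq_tmul_commutator hactM
  have hψφ : ψ.comp φ = LieHom.id := hT3.hom_ext fun m x => by simp [hφ, hact, hψ]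
  have hφψ : φ.comp ψ = LieHom.id := IsNATensor.hom_ext hT2 fun m n => by
    obtain ⟨x, rfl⟩ := hT2.commutator_surjective hperf n
    simp [hψ, hφ, hact]
  refine ⟨LieEquiv.mk φ ψ (fun y => congr($hψφ y)) (fun x => congr($hφψ x)),
    fun m a b => ?_, fun m a b => ?_⟩
  · exact (hφ m _).trans (hactM m a b)
  · show ψ _ = _
    simpa using hψ m (t2 a b)
end
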